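/- Let δ := P′(1) and V := P″(1). For the walk with resets, for every n ≥ 1 the final altitude satisfies E[Y_n] = δ/q + (1−q)^{n−1}(δ − δ/q) and Var[Y_n] = ((V+δ)q + δ²)/q² + (1−q)^n · (2δ²n/((q−1)q) − (V+δ)/q) − (1−q)^{2n} · δ²/q². -/

import Mathlib

/-- Altitude of the walk with resets after `j` steps, driven by the letters
`ω 0, ω 1, …` where `none` means a reset and `some k` means a jump by `k ∈ S`. -/
def walkY (S : Finset ℤ) (ω : ℕ → Option {k // k ∈ S}) : ℕ → ℤ
  | 0 => 0
  | j + 1 =>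
    match ω j with
    | none => 0
    | some k => walkY S ω j + (k : ℤ)

/-- Expectation of the functional `f` under the product measure on walks of length `n`,
where each letter `some k` (for `k ∈ S`) has weight `p k` and `none` (reset) has weight `q`. -/
noncomputable def walkE (S : Finset ℤ) (p : ℤ → ℝ) (q : ℝ) (n : ℕ)
    (f : (ℕ → Option {k // k ∈ S}) → ℝ) : ℝ :=
  ∑ ω : Fin n → Option {k // k ∈ S},
    (∏ i, Option.elim (ω i) q (fun k => p k)) *
      f (fun j => if h : j < n then ω ⟨j, h⟩ else none)

section Aux

variable (S : Finset ℤ) (p : ℤ → ℝ) (q : ℝ)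

lemma walkY_congr (ω ω' : ℕ → Option {k // k ∈ S}) :
    ∀ m, (∀ j < m, ω j = ω' j) → walkY S ω m = walkY S ω' m
  | 0, _ => rfl
  | m + 1, h => by
    have hm : walkY S ω m = walkY S ω' m :=
      walkY_congr ω ω' m (fun j hj => h j (Nat.lt_succ_of_lt hj))
    show (match ω m with
      | none => 0
      | some k => walkY S ω m + (k : ℤ)) =
      (match ω' m with
      | none => 0
      | some k => walkY S ω' m + (k : ℤ))
    rw [h m (Nat.lt_succ_self m), hm]

lemma walkE_step (n : ℕ) (f : ℤ → ℝ) :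
    walkE S p q (n + 1) (fun Y => f (walkY S Y (n + 1)))
      = q * walkE S p q n (fun _ => f 0)
        + ∑ k ∈ S.attach, p (k : ℤ) * walkE S p q n (fun Y => f (walkY S Y n + (k : ℤ))) := by
  classical
  unfold walkE
  rw [← Equiv.sum_comp (Fin.snocEquiv (fun _ => Option {k // k ∈ S}))]
  rw [Fintype.sum_prod_type]
  have key : ∀ (a : Option {k // k ∈ S}) (ω : Fin n → Option {k // k ∈ S}),
      (∏ i : Fin (n + 1),
        Option.elim (Fin.snocEquiv (fun _ => Option {k // k ∈ S}) (a, ω) i) q (fun k => p k)) *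
        f (walkY S (fun j => if h : j < n + 1 then
            Fin.snocEquiv (fun _ => Option {k // k ∈ S}) (a, ω) ⟨j, h⟩ else none) (n + 1))
      = Option.elim a q (fun k => p k) *
          ((∏ i : Fin n, Option.elim (ω i) q (fun k => p k)) *
            f (Option.elim a 0
              (fun k => walkY S (fun j => if h : j < n then ω ⟨j, h⟩ else none) n + (k : ℤ)))) := by
    intro a ω
    have hsnoc : ∀ i : Fin n,
        Fin.snocEquiv (fun _ => Option {k // k ∈ S}) (a, ω) (Fin.castSucc i) = ω i := by
      intro i; simp [Fin.snocEquiv]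
    have hlast : Fin.snocEquiv (fun _ => Option {k // k ∈ S}) (a, ω) (Fin.last n) = a := by
      simp [Fin.snocEquiv]
    have hprod : (∏ i : Fin (n + 1),
        Option.elim (Fin.snocEquiv (fun _ => Option {k // k ∈ S}) (a, ω) i) q (fun k => p k))
        = (∏ i : Fin n, Option.elim (ω i) q (fun k => p k)) * Option.elim a q (fun k => p k) := by
      rw [Fin.prod_univ_castSucc]
      simp only [hsnoc, hlast]
    have hY : walkY S (fun j => if h : j < n + 1 then
        Fin.snocEquiv (fun _ => Option {k // k ∈ S}) (a, ω) ⟨j, h⟩ else none) (n + 1)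
        = Option.elim a 0
            (fun k => walkY S (fun j => if h : j < n then ω ⟨j, h⟩ else none) n + (k : ℤ)) := by
      have hωn : (fun j => if h : j < n + 1 then
          Fin.snocEquiv (fun _ => Option {k // k ∈ S}) (a, ω) ⟨j, h⟩ else none) n = a := by
        simp only [Nat.lt_succ_self, dif_pos]
        have : (⟨n, Nat.lt_succ_self n⟩ : Fin (n + 1)) = Fin.last n := rfl
        rw [this, hlast]
      have hinit : walkY S (fun j => if h : j < n + 1 then
          Fin.snocEquiv (fun _ => Option {k // k ∈ S}) (a, ω) ⟨j, h⟩ else none) n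
          = walkY S (fun j => if h : j < n then ω ⟨j, h⟩ else none) n := by
        apply walkY_congr
        intro j hj
        have hj' : j < n + 1 := Nat.lt_succ_of_lt hj
        simp only [dif_pos hj', dif_pos hj]
        have : (⟨j, hj'⟩ : Fin (n + 1)) = Fin.castSucc ⟨j, hj⟩ := rfl
        rw [this, hsnoc]
      show (match (fun j => if h : j < n + 1 then
          Fin.snocEquiv (fun _ => Option {k // k ∈ S}) (a, ω) ⟨j, h⟩ else none) n with
        | none => 0
        | some k => walkY S (fun j => if h : j < n + 1 then
            Fin.snocEquiv (fun _ => Option {k // k ∈ S}) (a, ω) ⟨j, h⟩ else none) n + (k : ℤ)) = _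
      rw [hωn, hinit]
      cases a <;> rfl
    rw [hprod, hY]
    ring
  simp only [key]
  rw [_root_.univ_option, Finset.sum_insertNone]
  simp only [Option.elim]
  rw [Finset.univ_eq_attach]
  congr 1
  · rw [← Finset.mul_sum]
  · apply Finset.sum_congr rfl
    intro k _
    rw [← Finset.mul_sum]

lemma walkE_const (hsum : q + ∑ k ∈ S, p k = 1) :
    ∀ n (c : ℝ), walkE S p q n (fun _ => c) = c := by
  intro n
  induction n with
  | zero => intro c; simp [walkE]
  | succ m ih =>
      intro c
      have h := walkE_step S p q m (fun _ => c)
      simp only at h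
      rw [show (fun Y => c) = (fun Y : ℕ → Option {k // k ∈ S} =>
        (fun _ : ℤ => c) (walkY S Y (m + 1))) from rfl, h, ih c]
      rw [← Finset.sum_mul, Finset.sum_attach S (fun k => p k)]
      have : (∑ k ∈ S, p k) = 1 - q := by linarith
      rw [this]; ring

lemma walkE_add (n : ℕ) (f g : (ℕ → Option {k // k ∈ S}) → ℝ) :
    walkE S p q n (fun Y => f Y + g Y) = walkE S p q n f + walkE S p q n g := by
  unfold walkE
  rw [← Finset.sum_add_distrib]
  apply Finset.sum_congr rfl
  intro ω _; ring

lemma walkE_const_mul (n : ℕ) (c : ℝ) (f : (ℕ → Option {k // k ∈ S}) → ℝ) :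
    walkE S p q n (fun Y => c * f Y) = c * walkE S p q n f := by
  unfold walkE
  rw [Finset.mul_sum]
  apply Finset.sum_congr rfl
  intro ω _; ring

end Aux

/-- Mean and variance of the final altitude of the walk with resets,
where `δ = P′(1) = Σ_{k∈S} p_k k` and `V = P″(1) = Σ_{k∈S} p_k k (k-1)`. -/
theorem walkWithResets_finalAltitude_mean_variance
    (S : Finset ℤ) (hS : S.Nonempty) (p : ℤ → ℝ) (q : ℝ)
    (hp : ∀ k ∈ S, 0 < p k) (hq0 : 0 < q) (hq1 : q < 1)
    (hsum : q + ∑ k ∈ S, p k = 1)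
    (δ V : ℝ)
    (hδ : δ = ∑ k ∈ S, p k * (k : ℝ))
    (hV : V = ∑ k ∈ S, p k * (k : ℝ) * ((k : ℝ) - 1))
    (n : ℕ) (hn : 1 ≤ n) :
    walkE S p q n (fun Y => (walkY S Y n : ℝ))
        = δ / q + (1 - q) ^ (n - 1) * (δ - δ / q)
    ∧ walkE S p q n (fun Y => ((walkY S Y n : ℝ)) ^ 2)
        - (walkE S p q n (fun Y => (walkY S Y n : ℝ))) ^ 2
        = ((V + δ) * q + δ ^ 2) / q ^ 2
          + (1 - q) ^ n * (2 * δ ^ 2 * n / ((q - 1) * q) - (V + δ) / q)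
          - (1 - q) ^ (2 * n) * δ ^ 2 / q ^ 2 := by
  classical
  have hq : q ≠ 0 := ne_of_gt hq0
  have hq1' : (1 : ℝ) - q ≠ 0 := by linarith
  have hqm1 : q - 1 ≠ 0 := by intro h; apply hq1'; linarith
  have hpsum : (∑ k ∈ S, p k) = 1 - q := by linarith
  -- abbreviations
  set E : ℕ → ℝ := fun m => walkE S p q m (fun Y => (walkY S Y m : ℝ)) with hE
  set M : ℕ → ℝ := fun m => walkE S p q m (fun Y => ((walkY S Y m : ℝ)) ^ 2) with hM
  -- recurrences
  have hE0 : E 0 = 0 := by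
    simp [hE, walkE, walkY]
  have hM0 : M 0 = 0 := by
    simp [hM, walkE, walkY]
  have hErec : ∀ m, E (m + 1) = (1 - q) * E m + δ := by
    intro m
    have h := walkE_step S p q m (fun z => (z : ℝ))
    simp only [hE]
    rw [h]
    rw [walkE_const S p q hsum m _]
    push_cast
    have : ∀ k ∈ S.attach, p (k : ℤ) *
        walkE S p q m (fun Y => ((walkY S Y m : ℤ) : ℝ) + ((k : ℤ) : ℝ))
        = p (k : ℤ) * (E m + ((k : ℤ) : ℝ)) := by
      intro k _
      congr 1
      rw [show (fun Y => ((walkY S Y m : ℤ) : ℝ) + ((k : ℤ) : ℝ))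
        = (fun Y : ℕ → Option {x // x ∈ S} => ((walkY S Y m : ℤ) : ℝ) + (fun _ => ((k : ℤ) : ℝ)) Y)
        from rfl, walkE_add, walkE_const S p q hsum]
    rw [Finset.sum_congr rfl this,
      Finset.sum_attach S (fun k => p k * (E m + (k : ℝ)))]
    have split : ∀ k ∈ S, p k * (E m + (k : ℝ)) = p k * E m + p k * (k : ℝ) :=
      fun k _ => by ring
    rw [Finset.sum_congr rfl split]
    simp only [Finset.sum_add_distrib, ← Finset.sum_mul]
    rw [hpsum, ← hδ]
    push_cast
    ring
  have hMrec : ∀ m, M (m + 1) = (1 - q) * M m + 2 * δ * E m + (V + δ) := by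
    intro m
    have h := walkE_step S p q m (fun z => ((z : ℝ)) ^ 2)
    simp only [hM]
    rw [h]
    rw [walkE_const S p q hsum m _]
    have : ∀ k ∈ S.attach, p (k : ℤ) *
        walkE S p q m (fun Y => (((walkY S Y m + (k : ℤ) : ℤ)) : ℝ) ^ 2)
        = p (k : ℤ) * (M m + 2 * ((k : ℤ) : ℝ) * E m + ((k : ℤ) : ℝ) ^ 2) := by
      intro k _
      congr 1
      have hfun : (fun Y : ℕ → Option {x // x ∈ S} => (((walkY S Y m + (k : ℤ) : ℤ)) : ℝ) ^ 2)
          = (fun Y => ((walkY S Y m : ℝ)) ^ 2 + (2 * ((k : ℤ) : ℝ) * (walkY S Y m : ℝ)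
              + (fun _ => ((k : ℤ) : ℝ) ^ 2) Y)) := by
        funext Y; push_cast; ring
      rw [hfun, walkE_add, walkE_add, walkE_const_mul, walkE_const S p q hsum]
      simp only [hM, hE]
      ring
    rw [Finset.sum_congr rfl this,
      Finset.sum_attach S (fun k => p k * (M m + 2 * (k : ℝ) * E m + (k : ℝ) ^ 2))]
    have split : ∀ k ∈ S, p k * (M m + 2 * (k : ℝ) * E m + (k : ℝ) ^ 2)
        = p k * M m + ((p k * (k : ℝ)) * (2 * E m)
            + (p k * (k : ℝ) * ((k : ℝ) - 1) + p k * (k : ℝ))) := fun k _ => by ring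
    rw [Finset.sum_congr rfl split]
    simp only [Finset.sum_add_distrib, ← Finset.sum_mul]
    rw [hpsum, ← hδ, ← hV]
    ring
  -- closed forms
  have key : ∀ m : ℕ,
      E (m + 1) = δ / q + (1 - q) ^ m * (δ - δ / q)
      ∧ M (m + 1) = ((V + δ) * q + δ ^ 2) / q ^ 2
          + (1 - q) ^ (m + 1) * (2 * δ ^ 2 * (m + 1 : ℕ) / ((q - 1) * q) - (V + δ) / q)
          - (1 - q) ^ (2 * (m + 1)) * δ ^ 2 / q ^ 2
          + (δ / q + (1 - q) ^ m * (δ - δ / q)) ^ 2 := by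
    intro m
    induction m with
    | zero =>
        constructor
        · rw [hErec 0, hE0]; ring
        · rw [hMrec 0, hM0, hE0]
          push_cast
          field_simp [hq, hqm1]
          ring
    | succ m ih =>
        obtain ⟨ihE, ihM⟩ := ih
        constructor
        · rw [hErec (m + 1), ihE]
          rw [pow_succ]
          field_simp
          ring
        · rw [hMrec (m + 1), ihM, ihE]
          have h2 : (2 * (m + 1 + 1)) = 2 * (m + 1) + 2 := by ring
          rw [h2, pow_add, pow_succ (1 - q) (m + 1)]
          have h3 : (1 - q) ^ (2 * (m + 1)) = ((1 - q) ^ (m + 1)) ^ 2 := by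
            rw [← pow_mul]; ring_nf
          rw [h3, pow_succ (1 - q) m]
          push_cast
          field_simp [hq, hqm1]
          ring
  obtain ⟨m, rfl⟩ : ∃ m, n = m + 1 := ⟨n - 1, (Nat.succ_pred_eq_of_pos hn).symm⟩
  obtain ⟨kE, kM⟩ := key m
  have g1 : walkE S p q (m + 1) (fun Y => (walkY S Y (m + 1) : ℝ))
      = δ / q + (1 - q) ^ m * (δ - δ / q) := kE
  have g2 : walkE S p q (m + 1) (fun Y => ((walkY S Y (m + 1) : ℝ)) ^ 2)
      = ((V + δ) * q + δ ^ 2) / q ^ 2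
          + (1 - q) ^ (m + 1) * (2 * δ ^ 2 * (m + 1 : ℕ) / ((q - 1) * q) - (V + δ) / q)
          - (1 - q) ^ (2 * (m + 1)) * δ ^ 2 / q ^ 2
          + (δ / q + (1 - q) ^ m * (δ - δ / q)) ^ 2 := kM
  constructor
  · rw [g1]
    simp only [Nat.add_sub_cancel]
  · rw [g1, g2]
    ring
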